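/- Let f:(0,∞)→ℝ² be smooth with f(z) = (-Δ + |z|²·Id + V(z))-type structure; more concretely: the bilinear form B[φ,ψ] = ∫_{ℝ²} (∇φ·∇ψ + f² φψ), where f:ℝ²→ℝ is continuous, 0 ≤ f ≤ 1, and f(x) → 1 as |x| → ∞, is coercive on H¹(ℝ²): there exists λ > 0 such that B[φ,φ] ≥ λ‖φ‖²_{H¹} for every φ ∈ H¹(ℝ²). -/

import Mathlib

open MeasureTheory


noncomputable def Teq : EuclideanSpace ℝ (Fin 2) ≃L[ℝ] ℝ × ℝ :=
  (EuclideanSpace.equiv (Fin 2) ℝ).trans (ContinuousLinearEquiv.finTwoArrow ℝ ℝ)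

lemma Teq_mp : MeasurePreserving Teq volume volume := by
  have h1 := EuclideanSpace.volume_preserving_symm_measurableEquiv_toLp (Fin 2)
  have h2 := volume_preserving_finTwoArrow ℝ
  have he : (⇑Teq) = (⇑(MeasurableEquiv.finTwoArrow)) ∘ (⇑(MeasurableEquiv.toLp 2 (Fin 2 → ℝ)).symm) := rfl
  rw [he]
  exact h2.comp h1

lemma prodmk_closedEmbedding (a : ℝ) : Topology.IsClosedEmbedding (Prod.mk a : ℝ → ℝ × ℝ) := by
  refine ⟨isEmbedding_prodMkRight a, ?_⟩
  have : Set.range (Prod.mk a : ℝ → ℝ × ℝ) = Prod.fst ⁻¹' {a} := by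
    ext p; simp [eq_comm, Prod.ext_iff]
  rw [this]
  exact isClosed_singleton.preimage continuous_fst

-- pointwise sup bound
lemma sq_le_int (g g' : ℝ → ℝ) (hd : ∀ s, HasDerivAt g (g' s) s)
    (hgc : Continuous g) (hg'c : Continuous g') (hsupp : HasCompactSupport g)
    (ε : ℝ) (hε : 0 < ε) (x : ℝ) :
    g x ^ 2 ≤ ∫ s, (ε * g s ^ 2 + ε⁻¹ * g' s ^ 2) := by
  -- integrability
  have hgsq : HasCompactSupport (fun s => g s ^ 2) := hsupp.comp_left (g := fun t : ℝ => t ^ 2) (by simp)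
  have hg' : HasCompactSupport g' := by
    have : HasCompactSupport (fun s => deriv g s) := hsupp.deriv
    have he : g' = deriv g := by funext s; exact ((hd s).deriv).symm
    rwa [he]
  have hg'sq : HasCompactSupport (fun s => g' s ^ 2) := hg'.comp_left (g := fun t : ℝ => t ^ 2) (by simp)
  have hH : Continuous (fun s => ε * g s ^ 2 + ε⁻¹ * g' s ^ 2) := by continuity
  have hHsupp : HasCompactSupport (fun s => ε * g s ^ 2 + ε⁻¹ * g' s ^ 2) :=
    (hgsq.mul_left).add (hg'sq.mul_left)
  have hint : Integrable (fun s => ε * g s ^ 2 + ε⁻¹ * g' s ^ 2) := hH.integrable_of_hasCompactSupport hHsupp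
  have hHnn : ∀ s, 0 ≤ ε * g s ^ 2 + ε⁻¹ * g' s ^ 2 := fun s => by positivity
  -- find b with g b = 0, b ≥ x
  obtain ⟨M, hM⟩ := (hsupp.isCompact.isBounded).subset_closedBall 0
  set b := max x M + 1 with hb
  have hxb : x ≤ b := le_trans (le_max_left _ _) (by linarith)
  have hgb : g b = 0 := by
    apply image_eq_zero_of_notMem_tsupport
    intro hmem
    have := hM hmem
    simp only [Metric.mem_closedBall, Real.dist_eq, sub_zero] at this
    have h1 : M ≤ max x M := le_max_right _ _
    have h2 : |b| ≥ b := le_abs_self b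
    linarith [abs_le.mp this |>.2]
  -- FTC
  have hderiv : ∀ s ∈ Set.uIcc x b, HasDerivAt (fun t => g t ^ 2) (2 * g s * g' s) s := by
    intro s _
    have := (hd s).fun_pow 2
    simpa [mul_comm, mul_assoc, mul_left_comm] using this
  have hcont : IntervalIntegrable (fun s => 2 * g s * g' s) volume x b :=
    (by continuity : Continuous fun s => 2 * g s * g' s).intervalIntegrable x b
  have hftc : ∫ s in x..b, 2 * g s * g' s = g b ^ 2 - g x ^ 2 :=
    intervalIntegral.integral_eq_sub_of_hasDerivAt hderiv hcont
  have key : g x ^ 2 = ∫ s in x..b, (-(2 * g s * g' s)) := by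
    rw [intervalIntegral.integral_neg, hftc, hgb]; ring
  rw [key]
  -- bound
  have h1 : ∫ s in x..b, (-(2 * g s * g' s)) ≤ ∫ s in x..b, (ε * g s ^ 2 + ε⁻¹ * g' s ^ 2) := by
    apply intervalIntegral.integral_mono_on hxb hcont.neg hint.intervalIntegrable
    intro s _
    simp only [Pi.neg_apply]
    nlinarith [sq_nonneg (ε * g s + g' s), mul_pos hε hε, sq_nonneg (g s), mul_le_mul_of_nonneg_left (sq_nonneg (ε * g s + g' s)) (le_of_lt (inv_pos.mpr hε)), mul_inv_cancel₀ (ne_of_gt hε)]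
  refine h1.trans ?_
  rw [intervalIntegral.integral_of_le hxb]
  calc ∫ s in Set.Ioc x b, (ε * g s ^ 2 + ε⁻¹ * g' s ^ 2) ∂volume
      ≤ ∫ s, (ε * g s ^ 2 + ε⁻¹ * g' s ^ 2) := by
        apply setIntegral_le_integral hint
        filter_upwards with s using hHnn s

lemma oneD (g g' : ℝ → ℝ) (hd : ∀ s, HasDerivAt g (g' s) s)
    (hgc : Continuous g) (hg'c : Continuous g') (hsupp : HasCompactSupport g)
    (R : ℝ) (hR : 1 ≤ R) :
    ∫ s, g s ^ 2 ≤ 16 * R ^ 2 * (∫ s, g' s ^ 2)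
      + 2 * ∫ s, Set.indicator {s : ℝ | R ≤ |s|} (fun s => g s ^ 2) s := by
  have hRpos : (0:ℝ) < R := lt_of_lt_of_le one_pos hR
  set ε : ℝ := (4 * R)⁻¹ with hεdef
  have hε : 0 < ε := by positivity
  have hgsq : HasCompactSupport (fun s => g s ^ 2) := hsupp.comp_left (g := fun t : ℝ => t ^ 2) (by simp)
  have hg' : HasCompactSupport g' := by
    have : HasCompactSupport (fun s => deriv g s) := hsupp.deriv
    have he : g' = deriv g := by funext s; exact ((hd s).deriv).symm
    rwa [he]
  have hg'sq : HasCompactSupport (fun s => g' s ^ 2) := hg'.comp_left (g := fun t : ℝ => t ^ 2) (by simp)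
  have Isq : Integrable (fun s => g s ^ 2) := (by continuity : Continuous fun s => g s ^ 2).integrable_of_hasCompactSupport hgsq
  have I'sq : Integrable (fun s => g' s ^ 2) := (by continuity : Continuous fun s => g' s ^ 2).integrable_of_hasCompactSupport hg'sq
  set Sg := ∫ s, g s ^ 2 with hSg
  set Sg' := ∫ s, g' s ^ 2 with hSg'
  set K := ∫ s, (ε * g s ^ 2 + ε⁻¹ * g' s ^ 2) with hK
  have hKval : K = ε * Sg + ε⁻¹ * Sg' := by
    rw [hK, integral_add (Isq.const_mul ε) (I'sq.const_mul ε⁻¹), integral_const_mul, integral_const_mul]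
  have hsup : ∀ x, g x ^ 2 ≤ K := fun x => sq_le_int g g' hd hgc hg'c hsupp ε hε x
  -- indicator set
  have hmeas : MeasurableSet {s : ℝ | R ≤ |s|} :=
    (isClosed_le continuous_const continuous_abs).measurableSet
  have hind : ∫ s, Set.indicator {s : ℝ | R ≤ |s|} (fun s => g s ^ 2) s
      = ∫ s in {s : ℝ | R ≤ |s|}, g s ^ 2 := integral_indicator hmeas
  set A := ∫ s, Set.indicator {s : ℝ | R ≤ |s|} (fun s => g s ^ 2) s with hA
  -- split
  have hsplit : (∫ s in Set.Icc (-R) R, g s ^ 2) + ∫ s in (Set.Icc (-R) R)ᶜ, g s ^ 2 = Sg :=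
    integral_add_compl measurableSet_Icc Isq
  -- bound on Icc
  have hB : ∫ s in Set.Icc (-R) R, g s ^ 2 ≤ 2 * R * K := by
    have h1 : ∫ s in Set.Icc (-R) R, g s ^ 2 ≤ ∫ _ in Set.Icc (-R) R, K := by
      apply setIntegral_mono_on Isq.integrableOn (integrableOn_const measure_Icc_lt_top.ne) measurableSet_Icc
      exact fun s _ => hsup s
    rw [setIntegral_const, measureReal_def, Real.volume_Icc, smul_eq_mul] at h1
    calc ∫ s in Set.Icc (-R) R, g s ^ 2 ≤ (ENNReal.ofReal (R - -R)).toReal * K := h1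
      _ = 2 * R * K := by
          rw [ENNReal.toReal_ofReal (by linarith)]; ring
  -- tail bound
  have htail : ∫ s in (Set.Icc (-R) R)ᶜ, g s ^ 2 ≤ A := by
    rw [hind]
    apply setIntegral_mono_set Isq.integrableOn
    · filter_upwards with s using sq_nonneg _
    · filter_upwards with s hs
      by_contra hlt
      have hlt0 : ¬ R ≤ |s| := hlt
      have hlt' : |s| < R := lt_of_not_ge hlt0
      have hs' : s ∉ Set.Icc (-R) R := hs
      exact hs' (Set.mem_Icc.mpr ⟨by linarith [(abs_lt.mp hlt').1], le_of_lt (abs_lt.mp hlt').2⟩)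
  -- arithmetic
  have hεinv : ε⁻¹ = 4 * R := by rw [hεdef, inv_inv]
  have h2Rε : 2 * R * ε = 1 / 2 := by
    rw [hεdef]; field_simp; ring
  have hKexp : 2 * R * K = (1/2) * Sg + 8 * R ^ 2 * Sg' := by
    have hRne : R ≠ 0 := ne_of_gt hRpos
    rw [hKval, hεinv, hεdef]; field_simp; ring
  have hSg'nn : 0 ≤ Sg' := integral_nonneg fun s => sq_nonneg _
  linarith [hB, htail, hsplit, hKexp]

lemma int_transfer (h : EuclideanSpace ℝ (Fin 2) → ℝ) :
    ∫ x, h x = ∫ p : ℝ × ℝ, h (Teq.symm p) := by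
  have h0 := Teq_mp.integral_comp (Teq.toHomeomorph.measurableEmbedding)
    (fun p : ℝ × ℝ => h (Teq.symm p))
  rw [← h0]
  congr 1
  funext x
  simp

lemma fubini_vol (F : ℝ × ℝ → ℝ) (hF : Integrable F) :
    ∫ p, F p = ∫ a, ∫ s, F (a, s) := by
  rw [Measure.volume_eq_prod] at hF ⊢
  exact integral_prod F hF

lemma coord_le_norm (x : EuclideanSpace ℝ (Fin 2)) (i : Fin 2) : |x i| ≤ ‖x‖ := by
  rw [EuclideanSpace.norm_eq]
  calc |x i| = Real.sqrt (|x i| ^ 2) := by rw [Real.sqrt_sq_eq_abs, abs_abs]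
    _ ≤ Real.sqrt (∑ j, ‖x j‖ ^ 2) := by
        apply Real.sqrt_le_sqrt
        have := Finset.single_le_sum (f := fun j => ‖x j‖ ^ 2)
          (fun j _ => by positivity) (Finset.mem_univ i)
        simpa [Real.norm_eq_abs] using this


set_option maxHeartbeats 2000000 in
/-- Coercivity of the bilinear form `B[φ,φ] = ∫ (|∇φ|² + f² φ²)` on `H¹(ℝ²)`
(stated on the dense subspace of smooth compactly supported functions), where
`f : ℝ² → ℝ` is continuous, `0 ≤ f ≤ 1` and `f(x) → 1` as `|x| → ∞`:
there is `λ > 0` with `B[φ,φ] ≥ λ ‖φ‖²_{H¹}` for all `φ`. -/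
theorem coercivity_of_GL_form (f : EuclideanSpace ℝ (Fin 2) → ℝ)
    (hf_cont : Continuous f) (hf0 : ∀ x, 0 ≤ f x) (hf1 : ∀ x, f x ≤ 1)
    (hf_lim : Filter.Tendsto f (Filter.cocompact (EuclideanSpace ℝ (Fin 2))) (nhds 1)) :
    ∃ lam > (0 : ℝ), ∀ φ : EuclideanSpace ℝ (Fin 2) → ℝ,
      ContDiff ℝ (⊤ : ℕ∞) φ → HasCompactSupport φ →
      lam * ∫ x, (‖fderiv ℝ φ x‖ ^ 2 + φ x ^ 2) ≤
        ∫ x, (‖fderiv ℝ φ x‖ ^ 2 + f x ^ 2 * φ x ^ 2) := by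
  classical
  -- choose R
  have h34 : ∀ᶠ x in Filter.cocompact (EuclideanSpace ℝ (Fin 2)), (3:ℝ)/4 < f x :=
    hf_lim.eventually (eventually_gt_nhds (show (3:ℝ)/4 < 1 by norm_num))
  obtain ⟨K, hKc, hKsub⟩ := Filter.mem_cocompact.mp h34
  obtain ⟨R₀, hR₀⟩ := hKc.isBounded.subset_closedBall 0
  set R : ℝ := max R₀ 1 + 1 with hRdef
  have hR1 : 1 ≤ R := by
    have := le_max_right R₀ 1; simp only [hRdef]; linarith
  have hRpos : 0 < R := lt_of_lt_of_le one_pos hR1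
  have hfar : ∀ x : EuclideanSpace ℝ (Fin 2), R ≤ ‖x‖ → (1:ℝ)/2 ≤ f x ^ 2 := by
    intro x hx
    have hxK : x ∉ K := by
      intro hmem
      have h1 : ‖x‖ ≤ R₀ := by simpa [dist_zero_right] using hR₀ hmem
      have h2 : R₀ ≤ max R₀ 1 := le_max_left _ _
      have h3 : R ≤ R₀ := le_trans hx h1
      simp only [hRdef] at h3
      linarith
    have h34x : (3:ℝ)/4 < f x := hKsub hxK
    nlinarith
  set lam : ℝ := (16 * R ^ 2 + 5)⁻¹ with hlamdef
  have hlampos : 0 < lam := by positivity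
  refine ⟨lam, hlampos, ?_⟩
  intro φ hφ hφs
  -- basic objects
  set G : EuclideanSpace ℝ (Fin 2) → ℝ := fun x => ‖fderiv ℝ φ x‖ ^ 2 with hGdef
  set P : EuclideanSpace ℝ (Fin 2) → ℝ := fun x => φ x ^ 2 with hPdef
  set Q : EuclideanSpace ℝ (Fin 2) → ℝ := fun x => f x ^ 2 * φ x ^ 2 with hQdef
  have hφc : Continuous φ := hφ.continuous
  have hfd_cont : Continuous (fderiv ℝ φ) := hφ.continuous_fderiv (by simp)
  have hGc : Continuous G := (hfd_cont.norm).pow 2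
  have hPc : Continuous P := hφc.pow 2
  have hQc : Continuous Q := (hf_cont.pow 2).mul (hφc.pow 2)
  have hGs : HasCompactSupport G :=
    (HasCompactSupport.fderiv (𝕜 := ℝ) hφs).comp_left (g := fun L : EuclideanSpace ℝ (Fin 2) →L[ℝ] ℝ => ‖L‖ ^ 2) (by simp)
  have hPs : HasCompactSupport P := hφs.comp_left (g := fun t : ℝ => t ^ 2) (by simp)
  have hQs : HasCompactSupport Q := hPs.mul_left
  have hGint : Integrable G := hGc.integrable_of_hasCompactSupport hGs
  have hPint : Integrable P := hPc.integrable_of_hasCompactSupport hPs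
  have hQint : Integrable Q := hQc.integrable_of_hasCompactSupport hQs
  -- indicator
  set S : Set (EuclideanSpace ℝ (Fin 2)) := {x | R ≤ |x 1|} with hSdef
  have hSmeas : MeasurableSet S :=
    (isClosed_le continuous_const ((EuclideanSpace.proj (1 : Fin 2)).continuous.abs)).measurableSet
  set Ind : EuclideanSpace ℝ (Fin 2) → ℝ := S.indicator P with hInddef
  have hIndint : Integrable Ind := hPint.indicator hSmeas
  have hIndle : ∀ x, Ind x ≤ 2 * Q x := by
    intro x
    by_cases hx : x ∈ S
    · rw [hInddef, Set.indicator_of_mem hx]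
      have h1 : R ≤ ‖x‖ := le_trans hx (coord_le_norm x 1)
      have h2 := hfar x h1
      have h3 := sq_nonneg (φ x)
      show φ x ^ 2 ≤ 2 * (f x ^ 2 * φ x ^ 2)
      nlinarith
    · rw [hInddef, Set.indicator_of_notMem hx]
      show (0:ℝ) ≤ 2 * (f x ^ 2 * φ x ^ 2)
      positivity
  -- direction vector
  set v : EuclideanSpace ℝ (Fin 2) := Teq.symm (0, 1) with hvdef
  have hv0 : v 0 = 0 := by rw [hvdef]; exact rfl
  have hv1 : v 1 = 1 := by rw [hvdef]; exact rfl
  have hvnorm : ‖v‖ = 1 := by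
    rw [EuclideanSpace.norm_eq]
    simp [Fin.sum_univ_two, hv0, hv1]
  -- curves
  have hcurve : ∀ (a s : ℝ),
      HasDerivAt (fun t : ℝ => (Teq.symm (a, t) : EuclideanSpace ℝ (Fin 2))) v s := by
    intro a s
    have h1 : (fun t : ℝ => (Teq.symm (a, t) : EuclideanSpace ℝ (Fin 2)))
        = fun t => Teq.symm (a, 0) + t • v := by
      funext t
      have hpt : ((a : ℝ), t) = ((a, (0:ℝ)) + t • ((0:ℝ), (1:ℝ))) := by
        simp [Prod.ext_iff]
      rw [hvdef, hpt, _root_.map_add, _root_.map_smul]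
    rw [h1]
    simpa using ((hasDerivAt_id s).smul_const v).const_add (Teq.symm ((a : ℝ), (0 : ℝ)))
  have hgd : ∀ (a s : ℝ), HasDerivAt (fun t : ℝ => φ (Teq.symm (a, t)))
      ((fderiv ℝ φ (Teq.symm (a, s))) v) s := by
    intro a s
    exact ((hφ.differentiable (by simp)) (Teq.symm (a, s))).hasFDerivAt.comp_hasDerivAt s (hcurve a s)
  have hsecCE : ∀ a : ℝ, Topology.IsClosedEmbedding
      (fun s : ℝ => (Teq.symm (a, s) : EuclideanSpace ℝ (Fin 2))) := by
    intro a
    exact (Teq.symm.toHomeomorph.isClosedEmbedding).comp (prodmk_closedEmbedding a)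
  -- per-slice estimate
  have key1 : ∀ a : ℝ, ∫ s, P (Teq.symm (a, s)) ≤ 16 * R ^ 2 * (∫ s, G (Teq.symm (a, s)))
      + 2 * ∫ s, Ind (Teq.symm (a, s)) := by
    intro a
    have hseccont : Continuous (fun s : ℝ => (Teq.symm (a, s) : EuclideanSpace ℝ (Fin 2))) :=
      (hsecCE a).continuous
    have hgc : Continuous (fun s : ℝ => φ (Teq.symm (a, s))) := hφc.comp hseccont
    have hg'c : Continuous (fun s : ℝ => (fderiv ℝ φ (Teq.symm (a, s))) v) :=
      (hfd_cont.comp hseccont).clm_apply continuous_const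
    have hgsupp : HasCompactSupport (fun s : ℝ => φ (Teq.symm (a, s))) :=
      hφs.comp_isClosedEmbedding (hsecCE a)
    have h1d := oneD (fun s => φ (Teq.symm (a, s)))
      (fun s => (fderiv ℝ φ (Teq.symm (a, s))) v) (hgd a) hgc hg'c hgsupp R hR1
    have hPeq : (fun s : ℝ => (φ (Teq.symm (a, s))) ^ 2) = fun s => P (Teq.symm (a, s)) := by
      funext s; rw [hPdef]
    have hindeq : (fun s : ℝ => Set.indicator {s : ℝ | R ≤ |s|}
        (fun s => (φ (Teq.symm (a, s))) ^ 2) s) = fun s => Ind (Teq.symm (a, s)) := by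
      funext s
      by_cases hs : s ∈ {s : ℝ | R ≤ |s|}
      · rw [Set.indicator_of_mem hs, hInddef, Set.indicator_of_mem, hPdef]
        exact hs
      · rw [Set.indicator_of_notMem hs, hInddef, Set.indicator_of_notMem]
        exact hs
    rw [hPeq, hindeq] at h1d
    -- bound derivative term by G
    have hg'supp : HasCompactSupport (fun s : ℝ => ((fderiv ℝ φ (Teq.symm (a, s))) v) ^ 2) :=
      (((HasCompactSupport.fderiv (𝕜 := ℝ) hφs).comp_isClosedEmbedding (hsecCE a))).comp_left
        (g := fun L : EuclideanSpace ℝ (Fin 2) →L[ℝ] ℝ => (L v) ^ 2) (by simp)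
    have hg'int : Integrable (fun s : ℝ => ((fderiv ℝ φ (Teq.symm (a, s))) v) ^ 2) :=
      (hg'c.pow 2).integrable_of_hasCompactSupport hg'supp
    have hGsec : Integrable (fun s : ℝ => G (Teq.symm (a, s))) :=
      (hGc.comp hseccont).integrable_of_hasCompactSupport (hGs.comp_isClosedEmbedding (hsecCE a))
    have hder : (∫ s, ((fderiv ℝ φ (Teq.symm (a, s))) v) ^ 2) ≤ ∫ s, G (Teq.symm (a, s)) := by
      apply integral_mono hg'int hGsec
      intro s
      have hle := (fderiv ℝ φ (Teq.symm (a, s))).le_opNorm v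
      rw [hvnorm, mul_one] at hle
      rw [hGdef]
      calc ((fderiv ℝ φ (Teq.symm (a, s))) v) ^ 2
          = |(fderiv ℝ φ (Teq.symm (a, s))) v| ^ 2 := (sq_abs _).symm
        _ ≤ ‖fderiv ℝ φ (Teq.symm (a, s))‖ ^ 2 := by
            apply pow_le_pow_left₀ (abs_nonneg _)
            simpa [Real.norm_eq_abs] using hle
    have h16 : (0:ℝ) ≤ 16 * R ^ 2 := by positivity
    nlinarith [h1d, hder, mul_le_mul_of_nonneg_left hder h16]
  -- integrability on the product
  have hTce : Topology.IsClosedEmbedding (⇑(Teq.symm) : ℝ × ℝ → EuclideanSpace ℝ (Fin 2)) :=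
    Teq.symm.toHomeomorph.isClosedEmbedding
  have hPint2 : Integrable (fun p : ℝ × ℝ => P (Teq.symm p)) :=
    (hPc.comp Teq.symm.continuous).integrable_of_hasCompactSupport
      (hPs.comp_isClosedEmbedding hTce)
  have hGint2 : Integrable (fun p : ℝ × ℝ => G (Teq.symm p)) :=
    (hGc.comp Teq.symm.continuous).integrable_of_hasCompactSupport
      (hGs.comp_isClosedEmbedding hTce)
  have hIndeq2 : (fun p : ℝ × ℝ => Ind (Teq.symm p))
      = Set.indicator {p : ℝ × ℝ | R ≤ |p.2|} (fun p => P (Teq.symm p)) := by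
    funext p
    by_cases hp : p ∈ {p : ℝ × ℝ | R ≤ |p.2|}
    · rw [Set.indicator_of_mem hp, hInddef, Set.indicator_of_mem]
      exact hp
    · rw [hInddef, Set.indicator_of_notMem hp, Set.indicator_of_notMem]
      exact hp
  have hIndint2 : Integrable (fun p : ℝ × ℝ => Ind (Teq.symm p)) := by
    rw [hIndeq2]
    exact hPint2.indicator (isClosed_le continuous_const continuous_snd.abs).measurableSet
  -- iterated integrals
  have hPiter : ∫ x, P x = ∫ a, ∫ s, P (Teq.symm (a, s)) := by
    rw [int_transfer P]; exact fubini_vol _ hPint2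
  have hGiter : ∫ x, G x = ∫ a, ∫ s, G (Teq.symm (a, s)) := by
    rw [int_transfer G]; exact fubini_vol _ hGint2
  have hInditer : ∫ x, Ind x = ∫ a, ∫ s, Ind (Teq.symm (a, s)) := by
    rw [int_transfer Ind]; exact fubini_vol _ hIndint2
  have hPint2' := hPint2; have hGint2' := hGint2; have hIndint2' := hIndint2
  rw [Measure.volume_eq_prod] at hPint2' hGint2' hIndint2'
  have hPinner : Integrable (fun a : ℝ => ∫ s, P (Teq.symm (a, s))) :=
    hPint2'.integral_prod_left
  have hGinner : Integrable (fun a : ℝ => ∫ s, G (Teq.symm (a, s))) :=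
    hGint2'.integral_prod_left
  have hIndinner : Integrable (fun a : ℝ => ∫ s, Ind (Teq.symm (a, s))) :=
    hIndint2'.integral_prod_left
  have hmono : (∫ a, ∫ s, P (Teq.symm (a, s)))
      ≤ ∫ a, (16 * R ^ 2 * (∫ s, G (Teq.symm (a, s))) + 2 * ∫ s, Ind (Teq.symm (a, s))) := by
    apply integral_mono hPinner ((hGinner.const_mul _).add (hIndinner.const_mul _))
    intro a
    exact key1 a
  have hsum : (∫ a, (16 * R ^ 2 * (∫ s, G (Teq.symm (a, s))) + 2 * ∫ s, Ind (Teq.symm (a, s))))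
      = 16 * R ^ 2 * (∫ a, ∫ s, G (Teq.symm (a, s))) + 2 * ∫ a, ∫ s, Ind (Teq.symm (a, s)) := by
    rw [integral_add (hGinner.const_mul _) (hIndinner.const_mul _),
      integral_const_mul, integral_const_mul]
  have key2 : ∫ x, P x ≤ 16 * R ^ 2 * (∫ x, G x) + 2 * ∫ x, Ind x := by
    rw [hPiter, hGiter, hInditer]
    calc (∫ a, ∫ s, P (Teq.symm (a, s)))
        ≤ ∫ a, (16 * R ^ 2 * (∫ s, G (Teq.symm (a, s))) + 2 * ∫ s, Ind (Teq.symm (a, s))) := hmono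
      _ = _ := hsum
  have hIndQ : ∫ x, Ind x ≤ 2 * ∫ x, Q x := by
    calc ∫ x, Ind x ≤ ∫ x, 2 * Q x := integral_mono hIndint (hQint.const_mul 2) hIndle
      _ = 2 * ∫ x, Q x := integral_const_mul 2 Q
  -- final arithmetic
  have hsplit1 : ∫ x, (‖fderiv ℝ φ x‖ ^ 2 + φ x ^ 2) = (∫ x, G x) + ∫ x, P x :=
    integral_add hGint hPint
  have hsplit2 : ∫ x, (‖fderiv ℝ φ x‖ ^ 2 + f x ^ 2 * φ x ^ 2) = (∫ x, G x) + ∫ x, Q x :=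
    integral_add hGint hQint
  rw [hsplit1, hsplit2]
  have hGnn : 0 ≤ ∫ x, G x := integral_nonneg fun x => by rw [hGdef]; positivity
  have hQnn : 0 ≤ ∫ x, Q x := integral_nonneg fun x => by rw [hQdef]; positivity
  have hlamval : lam * (16 * R ^ 2 + 5) = 1 := by
    rw [hlamdef]; field_simp
  set a := ∫ x, G x
  set b := ∫ x, P x
  set c := ∫ x, Q x
  have hb : b ≤ 16 * R ^ 2 * a + 4 * c := by linarith [key2, hIndQ]
  nlinarith [mul_nonneg hlampos.le hGnn, mul_nonneg hlampos.le hQnn,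
    mul_le_mul_of_nonneg_left hb hlampos.le, sq_nonneg R, hR1, hlampos]
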